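/- arXiv:2209.09371 — 3 statements merged into one kernel-verified Lean document; each statement's English description precedes it below -/
import Mathlib

section
/- (Hodge theorem, finite-dimensional case) Let ∂_k : V_k → V_{k-1} and ∂_{k+1} : V_{k+1} → V_k be linear maps between finite-dimensional inner product spaces with ∂_k ∘ ∂_{k+1} = 0, and let Δ_k = ∂_k†∂_k + ∂_{k+1}∂_{k+1}†. Then dim ker(Δ_k) = dim ker(∂_k) − rank(∂_{k+1}), i.e., the kernel dimension of the Laplacian equals the dimension of the homology ker(∂_k)/im(∂_{k+1}). -/
/-!
Since `⟪Δ x, x⟫ = ‖∂_k x‖² + ‖∂_{k+1}† x‖²`, the harmonic space `ker Δ_k` is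
`ker ∂_k ∩ ker ∂_{k+1}† = ker ∂_k ∩ (im ∂_{k+1})ᗮ`, the orthogonal complement of the boundaries
inside the cycles.
-/

open LinearMap Module

namespace LinearMap

variable {𝕜 E F G : Type*} [RCLike 𝕜]
  [NormedAddCommGroup E] [InnerProductSpace 𝕜 E] [FiniteDimensional 𝕜 E]
  [NormedAddCommGroup F] [InnerProductSpace 𝕜 F] [FiniteDimensional 𝕜 F]
  [NormedAddCommGroup G] [InnerProductSpace 𝕜 G] [FiniteDimensional 𝕜 G]

theorem re_inner_adjoint_comp_self_add_apply_self (A : E →ₗ[𝕜] F) (C : E →ₗ[𝕜] G) (x : E) :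
    RCLike.re (inner 𝕜 ((adjoint A ∘ₗ A + adjoint C ∘ₗ C) x) x) = ‖A x‖ ^ 2 + ‖C x‖ ^ 2 := by
  simp only [add_apply, comp_apply, inner_add_left, adjoint_inner_left, map_add,
    inner_self_eq_norm_sq]

theorem ker_adjoint_comp_self_add (A : E →ₗ[𝕜] F) (C : E →ₗ[𝕜] G) :
    ker (adjoint A ∘ₗ A + adjoint C ∘ₗ C) = ker A ⊓ ker C := by
  ext x
  simp only [Submodule.mem_inf, mem_ker]
  constructor
  · intro hx
    have hsum := re_inner_adjoint_comp_self_add_apply_self A C x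
    rw [hx, inner_zero_left, map_zero, eq_comm,
      add_eq_zero_iff_of_nonneg (sq_nonneg _) (sq_nonneg _)] at hsum
    exact ⟨norm_eq_zero.mp (pow_eq_zero_iff two_ne_zero |>.mp hsum.1),
      norm_eq_zero.mp (pow_eq_zero_iff two_ne_zero |>.mp hsum.2)⟩
  · rintro ⟨hA, hC⟩
    simp [hA, hC]

theorem ker_adjoint_comp_self_add_self_comp_adjoint (A : E →ₗ[𝕜] F) (B : G →ₗ[𝕜] E) :
    ker (adjoint A ∘ₗ A + B ∘ₗ adjoint B) = (range B)ᗮ ⊓ ker A := by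
  rw [orthogonal_range, inf_comm]
  simpa only [adjoint_adjoint] using ker_adjoint_comp_self_add A (adjoint B)

end LinearMap

/-- Hodge theorem (finite-dimensional case): for chain maps `∂_k`, `∂_{k+1}` with
`∂_k ∘ ∂_{k+1} = 0`, the kernel dimension of the Laplacian
`Δ_k = ∂_k†∂_k + ∂_{k+1}∂_{k+1}†` equals `dim ker ∂_k − rank ∂_{k+1}`,
the dimension of the homology `ker ∂_k / im ∂_{k+1}`. -/
theorem hodge_finrank_ker_laplacian
    {Vkm1 Vk Vkp1 : Type*}
    [NormedAddCommGroup Vkm1] [InnerProductSpace ℂ Vkm1] [FiniteDimensional ℂ Vkm1]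
    [NormedAddCommGroup Vk] [InnerProductSpace ℂ Vk] [FiniteDimensional ℂ Vk]
    [NormedAddCommGroup Vkp1] [InnerProductSpace ℂ Vkp1] [FiniteDimensional ℂ Vkp1]
    (dk : Vk →ₗ[ℂ] Vkm1) (dk1 : Vkp1 →ₗ[ℂ] Vk)
    (hchain : dk ∘ₗ dk1 = 0) :
    Module.finrank ℂ
        (LinearMap.ker ((LinearMap.adjoint dk) ∘ₗ dk + dk1 ∘ₗ (LinearMap.adjoint dk1)))
      = Module.finrank ℂ (LinearMap.ker dk) - Module.finrank ℂ (LinearMap.range dk1) := by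
  have hboundaries : range dk1 ≤ ker dk := range_le_ker_iff.mpr hchain
  rw [ker_adjoint_comp_self_add_self_comp_adjoint,
    ← Submodule.finrank_add_inf_finrank_orthogonal hboundaries, Nat.add_sub_cancel_left]
end

section
/- For integers m, n with m, n ≥ 2 and (n/(2m))² ≥ 2, the sum S = Σ_{i=0}^{m/2} ((m−i−1)!/((m−2i)! i!)) (2/n)^{m−2i} satisfies S ≤ 4 (more precisely S ≤ 2(n/2m)²/((n/2m)² − 1) ≤ 4). -/
/-!
With `y = 2m/n ≤ 1`, the `i`-th coefficient `(m-i-1)!/((m-2i)! i!)` is at most `(2/m) m^(m-2i)`: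
for `2i < m` the quotient `(m-i-1)!/i!` is a product of `m-2i-1` factors below `m`, and for
`2i = m` it equals `1/i = 2/m`. Hence the `i`-th term is at most `2 y^(m-2i) ≤ 2 (y²)^(⌊m/2⌋-i)`,
and the sum is bounded by the geometric series `2/(1-y²) = 2x²/(x²-1)` with `x = n/(2m)`,
which is at most `4` as soon as `x² ≥ 2`.
-/

open Finset Nat

theorem Nat.factorial_le_factorial_mul_pow_sub {a b : ℕ} (h : a ≤ b) :
    b ! ≤ a ! * b ^ (b - a) := by
  rw [← factorial_mul_descFactorial (Nat.sub_le b a), Nat.sub_sub_self h]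
  exact Nat.mul_le_mul_left _ (descFactorial_le_pow b _)

theorem Nat.mul_factorial_sub_sub_le {m i : ℕ} (hi : 2 * i ≤ m) :
    m * (m - i - 1)! ≤ 2 * i ! * m ^ (m - 2 * i) := by
  rcases hi.lt_or_eq with hlt | rfl
  · have hexp : m - 2 * i = (m - i - 1 - i) + 1 := by omega
    calc m * (m - i - 1)! ≤ m * (i ! * (m - i - 1) ^ (m - i - 1 - i)) :=
          Nat.mul_le_mul_left _ (factorial_le_factorial_mul_pow_sub (by omega))
      _ ≤ m * (i ! * m ^ (m - i - 1 - i)) := by gcongr; omega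
      _ = i ! * m ^ (m - 2 * i) := by rw [hexp, pow_succ]; ring
      _ ≤ 2 * i ! * m ^ (m - 2 * i) := by gcongr; omega
  · rcases i.eq_zero_or_pos with rfl | hi
    · simp
    · rw [show 2 * i - i - 1 = i - 1 by omega, Nat.sub_self, pow_zero, mul_one, mul_assoc,
        Nat.mul_factorial_pred hi.ne']

theorem factorial_ratio_mul_pow_le {m n i : ℕ} (hm : 0 < m) (hmn : 2 * m ≤ n)
    (hi : 2 * i ≤ m) :
    ((m - i - 1)! : ℝ) / ((m - 2 * i)! * i !) * (2 / n) ^ (m - 2 * i)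
      ≤ 2 * ((2 * m / n : ℝ) ^ 2) ^ (m / 2 - i) := by
  have hm' : (0 : ℝ) < m := by exact_mod_cast hm
  have hn' : (0 : ℝ) < n := by exact_mod_cast (by omega : 0 < n)
  set y : ℝ := 2 * m / n with hy
  have hy0 : 0 ≤ y := by positivity
  have hy1 : y ≤ 1 := by rw [hy, div_le_one hn']; exact_mod_cast hmn
  have hcoeff : ((m - i - 1)! : ℝ) / ((m - 2 * i)! * i !) ≤ 2 / m * m ^ (m - 2 * i) := by
    have key : (m : ℝ) * (m - i - 1)! ≤ 2 * i ! * m ^ (m - 2 * i) := by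
      exact_mod_cast mul_factorial_sub_sub_le hi
    calc ((m - i - 1)! : ℝ) / ((m - 2 * i)! * i !) ≤ (m - i - 1)! / i ! := by
          gcongr
          exact le_mul_of_one_le_left (by positivity)
            (by exact_mod_cast (m - 2 * i).factorial_pos)
      _ ≤ 2 / m * m ^ (m - 2 * i) := by
          rw [div_le_iff₀ (by positivity), div_mul_eq_mul_div, div_mul_eq_mul_div,
            le_div_iff₀ hm']
          linarith
  calc ((m - i - 1)! : ℝ) / ((m - 2 * i)! * i !) * (2 / n) ^ (m - 2 * i)
      ≤ 2 / m * m ^ (m - 2 * i) * (2 / n) ^ (m - 2 * i) := by gcongr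
    _ = 2 / m * y ^ (m - 2 * i) := by rw [hy]; ring
    _ ≤ 2 * y ^ (2 * (m / 2 - i)) :=
        mul_le_mul (div_le_self zero_le_two (by exact_mod_cast hm))
          (pow_le_pow_of_le_one hy0 hy1 (by omega)) (by positivity) zero_le_two
    _ = 2 * (y ^ 2) ^ (m / 2 - i) := by rw [pow_mul]

theorem sum_range_pow_sub_le {K : Type*} [Field K] [LinearOrder K] [IsStrictOrderedRing K]
    {r : K} (hr0 : 0 ≤ r) (hr1 : r < 1) (k : ℕ) :
    ∑ i ∈ range (k + 1), r ^ (k - i) ≤ (1 - r)⁻¹ := by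
  calc ∑ i ∈ range (k + 1), r ^ (k - i) = ∑ i ∈ range (k + 1), r ^ i := by
        simpa using sum_range_reflect (fun j => r ^ j) (k + 1)
    _ ≤ r ^ 0 / (1 - r) := by rw [range_eq_Ico]; exact geom_sum_Ico_le_of_lt_one hr0 hr1
    _ = (1 - r)⁻¹ := by rw [pow_zero, one_div]

theorem factorial_sum_bound_general (m n : ℕ)
    (hratio : ((n : ℝ) / (2 * m)) ^ 2 ≥ 2) :
    (∑ i ∈ Finset.range (m / 2 + 1),
        (((m - i - 1).factorial : ℝ) / (((m - 2 * i).factorial : ℝ) * (i.factorial : ℝ))) *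
          (2 / (n : ℝ)) ^ (m - 2 * i))
      ≤ 2 * ((n : ℝ) / (2 * m)) ^ 2 / (((n : ℝ) / (2 * m)) ^ 2 - 1)
    ∧ 2 * ((n : ℝ) / (2 * m)) ^ 2 / (((n : ℝ) / (2 * m)) ^ 2 - 1) ≤ 4 := by
  have hm : 0 < m := Nat.pos_of_ne_zero fun h => by norm_num [h] at hratio
  set t := ((n : ℝ) / (2 * m)) ^ 2 with ht
  have hmn : 2 * m ≤ n := by
    have : 1 ≤ (n : ℝ) / (2 * m) := by nlinarith [show 0 ≤ (n : ℝ) / (2 * m) by positivity]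
    rw [one_le_div (by positivity)] at this
    exact_mod_cast this
  have hinv : (2 * m / n : ℝ) ^ 2 = t⁻¹ := by rw [ht, ← inv_pow, inv_div]
  have ht1 : 1 < t := by linarith
  refine ⟨?_, by rw [div_le_iff₀ (by linarith)]; linarith⟩
  calc _ ≤ ∑ i ∈ range (m / 2 + 1), 2 * t⁻¹ ^ (m / 2 - i) :=
        sum_le_sum fun i hi =>
          hinv ▸ factorial_ratio_mul_pow_le hm hmn (by have := mem_range.mp hi; omega)
    _ = 2 * ∑ i ∈ range (m / 2 + 1), t⁻¹ ^ (m / 2 - i) := (mul_sum ..).symm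
    _ ≤ 2 * (1 - t⁻¹)⁻¹ := by
        gcongr; exact sum_range_pow_sub_le (by positivity) (inv_lt_one_of_one_lt₀ ht1) _
    _ = 2 * t / (t - 1) := by field_simp

/-- For integers `m, n ≥ 2` with `(n/(2m))² ≥ 2`, the sum
`S = Σ_{i=0}^{⌊m/2⌋} ((m−i−1)!/((m−2i)! i!)) (2/n)^{m−2i}` satisfies
`S ≤ 2(n/2m)²/((n/2m)² − 1) ≤ 4`. -/
theorem factorial_sum_bound (m n : ℕ) (hm : 2 ≤ m) (hn : 2 ≤ n)
    (hratio : ((n : ℝ) / (2 * m)) ^ 2 ≥ 2) :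
    (∑ i ∈ Finset.range (m / 2 + 1),
        (((m - i - 1).factorial : ℝ) / (((m - 2 * i).factorial : ℝ) * (i.factorial : ℝ))) *
          (2 / (n : ℝ)) ^ (m - 2 * i))
      ≤ 2 * ((n : ℝ) / (2 * m)) ^ 2 / (((n : ℝ) / (2 * m)) ^ 2 - 1)
    ∧ 2 * ((n : ℝ) / (2 * m)) ^ 2 / (((n : ℝ) / (2 * m)) ^ 2 - 1) ≤ 4 :=
  factorial_sum_bound_general m n hratio
end

section
/- Let A be Hermitian with eigenvalues in {0} ∪ [δ,1], kernel dimension β, and size N. Let χ be the output of the stochastic Chebyshev estimator: χ = (1/(n_v N)) Σ_{l=1}^{n_v} ⟨v_l| p~(A) |v_l⟩ with the degree-m polynomial p~ of Proposition (|p~| ≤ 1 on [0,1], |p~(λ) − 1_{λ=0}| ≤ ε on the spectrum) and v_l i.i.d. uniformly random Hadamard columns. If n_v ≥ C·log(2/η)/ε² and m ≥ log(1/ε)/√δ, then with probability at least 1 − η, |χ − β/N| ≤ 2ε. -/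
/-!
Write `q c = h_cᵀ p(A) h_c` for the Hadamard column `h_c`. Diagonalising `A` gives
`p(A) = U diag(p(λᵢ)) Uᵀ` with `|p(λᵢ)| ≤ 1`, so `|q c| ≤ ‖h_c‖² = N`, and the orthogonality
`∑_c h_c h_cᵀ = N·I` of the Hadamard columns gives `∑_c q c = N · tr p(A)`. Hence `χ` is the mean
of `n_v` independent uniform samples of `q / N ∈ [-1, 1]`, whose expectation is `tr p(A) / N`;
Hoeffding's inequality keeps `χ` within `ε` of it outside an event of probability
`2 exp(-n_v ε² / 2) ≤ η` (hence `C = 2`). Finally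
`|tr p(A) - β| ≤ ∑ᵢ |p(λᵢ) - 1_{λᵢ = 0}| ≤ N ε` supplies the second `ε`.
-/

open Matrix Polynomial Real Finset

/-- The `c`-th column of the `2^n × 2^n` Hadamard matrix: `(h_c)_x = (-1)^{x·c}`. -/
def hadamardCol (n : ℕ) (c : Fin n → Bool) : (Fin n → Bool) → ℝ :=
  fun x => (-1 : ℝ) ^ (Finset.univ.filter fun i => x i ∧ c i).card

open MeasureTheory ProbabilityTheory

theorem ProbabilityTheory.HasSubgaussianMGF.measureReal_abs_sum_ge_le_of_iIndepFun
    {Ω ι : Type*} {mΩ : MeasurableSpace Ω} {μ : Measure Ω} [IsFiniteMeasure μ]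
    {X : ι → Ω → ℝ} (h_indep : iIndepFun X μ) {c : ι → NNReal} {s : Finset ι}
    (h_subG : ∀ i ∈ s, HasSubgaussianMGF (X i) (c i) μ) {ε : ℝ} (hε : 0 ≤ ε) :
    μ.real {ω | ε ≤ |∑ i ∈ s, X i ω|} ≤ 2 * exp (-ε ^ 2 / (2 * ∑ i ∈ s, c i)) := by
  have h_neg : iIndepFun (fun i ω ↦ -X i ω) μ :=
    h_indep.comp (fun _ x ↦ -x) fun _ ↦ measurable_neg
  calc μ.real {ω | ε ≤ |∑ i ∈ s, X i ω|}
      ≤ μ.real ({ω | ε ≤ ∑ i ∈ s, X i ω} ∪ {ω | ε ≤ ∑ i ∈ s, -X i ω}) := by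
        refine measureReal_mono fun ω hω ↦ ?_
        simpa only [Set.mem_ofPred_eq, Set.mem_union, sum_neg_distrib] using le_abs.mp hω
    _ ≤ μ.real {ω | ε ≤ ∑ i ∈ s, X i ω} + μ.real {ω | ε ≤ ∑ i ∈ s, -X i ω} :=
        measureReal_union_le _ _
    _ ≤ 2 * exp (-ε ^ 2 / (2 * ∑ i ∈ s, c i)) := by
        rw [two_mul]
        exact add_le_add (measure_sum_ge_le_of_iIndepFun h_indep h_subG hε)
          (measure_sum_ge_le_of_iIndepFun h_neg (fun i hi ↦ (h_subG i hi).neg) hε)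

section UniformSampling

variable {S : Type*} [Fintype S] [MeasurableSpace S] [MeasurableSingletonClass S]

theorem measureReal_uniformOn_univ_setOf (p : S → Prop) [DecidablePred p] :
    (uniformOn (Set.univ : Set S)).real {s | p s} = (#{s | p s} : ℝ) / Fintype.card S := by
  rw [measureReal_def, uniformOn_univ, ← coe_filter_univ, Measure.count_apply_finset]
  simp [ENNReal.toReal_div]

theorem integral_uniformOn_univ (Y : S → ℝ) :
    ∫ s, Y s ∂uniformOn Set.univ = (∑ s, Y s) / Fintype.card S := by
  rw [integral_fintype Integrable.of_finite, sum_div]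
  refine sum_congr rfl fun s _ ↦ ?_
  simp only [measureReal_def, uniformOn_univ, Measure.count_singleton, ENNReal.toReal_div,
    ENNReal.toReal_one, ENNReal.toReal_natCast, smul_eq_mul]
  ring

variable {ι : Type*} [Fintype ι] [Nonempty S]

theorem iIndepFun_uniformOn_univ_pi (Y : S → ℝ) :
    iIndepFun (fun i (f : ι → S) ↦ Y (f i)) (uniformOn Set.univ) := by
  rw [← Set.pi_univ, uniformOn_pi]
  exact iIndepFun_pi fun _ ↦ (measurable_of_countable Y).aemeasurable

theorem hasSubgaussianMGF_uniformOn_univ_pi_sub_mean {Y : S → ℝ} {a b : ℝ}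
    (hY : ∀ s, Y s ∈ Set.Icc a b) (i : ι) :
    HasSubgaussianMGF (fun f : ι → S ↦ Y (f i) - (∑ s, Y s) / Fintype.card S)
      ((‖b - a‖₊ / 2) ^ 2) (uniformOn Set.univ) := by
  have h := hasSubgaussianMGF_of_mem_Icc (measurable_of_countable Y).aemeasurable
    (ae_of_all (uniformOn Set.univ) hY)
  rw [integral_uniformOn_univ,
    ← (measurePreserving_eval (fun _ : ι ↦ uniformOn (Set.univ : Set S)) i).map_eq,
    ← uniformOn_pi, Set.pi_univ] at h
  exact HasSubgaussianMGF.of_map (X := fun s ↦ Y s - (∑ s, Y s) / Fintype.card S)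
    (measurable_pi_apply i).aemeasurable h

end UniformSampling

theorem one_sub_two_mul_exp_le_card_filter_abs_sampleMean_sub_mean_lt
    {ι S : Type*} [Fintype ι] [DecidableEq ι] [Fintype S] [Nonempty S] (Y : S → ℝ) {a b : ℝ}
    (hY : ∀ s, Y s ∈ Set.Icc a b) {t : ℝ} (ht : 0 ≤ t) :
    1 - 2 * exp (-2 * Fintype.card ι * t ^ 2 / (b - a) ^ 2) ≤
      (#{f : ι → S | |(∑ i, Y (f i)) / Fintype.card ι - (∑ s, Y s) / Fintype.card S| < t} : ℝ)
        / Fintype.card (ι → S) := by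
  let _ : MeasurableSpace S := ⊤
  rcases isEmpty_or_nonempty ι with hι | hι
  · simp only [Fintype.card_eq_zero, CharP.cast_eq_zero, mul_zero, zero_mul, zero_div, exp_zero]
    exact (by norm_num : (1 : ℝ) - 2 * 1 ≤ 0).trans (by positivity)
  set k : ℝ := (Fintype.card ι : ℝ)
  have hk : 0 < k := by positivity
  set m : ℝ := (∑ s, Y s) / Fintype.card S
  let μ : Measure (ι → S) := uniformOn Set.univ
  have hdev : μ.real {f | k * t ≤ |∑ i, (Y (f i) - m)|}
      ≤ 2 * exp (-2 * k * t ^ 2 / (b - a) ^ 2) := by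
    refine (HasSubgaussianMGF.measureReal_abs_sum_ge_le_of_iIndepFun
      ((iIndepFun_uniformOn_univ_pi Y).comp (fun _ x ↦ x - m) fun _ ↦ measurable_sub_const m)
      (fun i _ ↦ hasSubgaussianMGF_uniformOn_univ_pi_sub_mean hY i)
      (mul_nonneg hk.le ht)).trans_eq ?_
    congr 2
    simp only [sum_const, card_univ, nsmul_eq_mul, NNReal.coe_mul, NNReal.coe_natCast,
      NNReal.coe_pow, NNReal.coe_div, coe_nnnorm, norm_eq_abs, NNReal.coe_ofNat, div_pow, sq_abs, k]
    field_simp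
  have hcompl : {f : ι → S | |(∑ i, Y (f i)) / k - m| < t}ᶜ
      = {f | k * t ≤ |∑ i, (Y (f i) - m)|} := by
    ext f
    have : ∑ i, (Y (f i) - m) = k * ((∑ i, Y (f i)) / k - m) := by
      rw [sum_sub_distrib, sum_const, card_univ, nsmul_eq_mul]
      field_simp
      ring
    simp only [Set.mem_compl_iff, Set.mem_ofPred_eq, not_lt, this, abs_mul, abs_of_pos hk]
    exact (mul_le_mul_iff_right₀ hk).symm
  have hgood := probReal_compl_eq_one_sub (μ := μ) (Set.toFinite
    {f : ι → S | |(∑ i, Y (f i)) / k - m| < t}).measurableSet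
  rw [hcompl] at hgood
  rw [← measureReal_uniformOn_univ_setOf]
  linarith

namespace Matrix

variable {ι : Type*} [Fintype ι]

theorem dotProduct_mul_mul_transpose_mulVec (U M : Matrix ι ι ℝ) (v : ι → ℝ) :
    v ⬝ᵥ ((U * M * Uᵀ) *ᵥ v) = (Uᵀ *ᵥ v) ⬝ᵥ (M *ᵥ (Uᵀ *ᵥ v)) := by
  rw [← mulVec_mulVec, ← mulVec_mulVec, dotProduct_mulVec, ← mulVec_transpose]

theorem abs_dotProduct_diagonal_mulVec_le [DecidableEq ι] {d : ι → ℝ} (hd : ∀ i, |d i| ≤ 1)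
    (w : ι → ℝ) : |w ⬝ᵥ (diagonal d *ᵥ w)| ≤ w ⬝ᵥ w := by
  simp only [mulVec_diagonal, dotProduct]
  refine (abs_sum_le_sum_abs _ _).trans (sum_le_sum fun i _ ↦ ?_)
  rw [mul_left_comm, abs_mul, abs_mul_self]
  exact mul_le_of_le_one_left (mul_self_nonneg _) (hd i)

namespace IsHermitian

variable [DecidableEq ι] {A : Matrix ι ι ℝ}

theorem aeval_eq_conj_diagonal (hA : A.IsHermitian) (P : ℝ[X]) :
    aeval A P = (hA.eigenvectorUnitary : Matrix ι ι ℝ) *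
      diagonal (fun i ↦ P.eval (hA.eigenvalues i)) *
        star (hA.eigenvectorUnitary : Matrix ι ι ℝ) := by
  rw [← cfc_polynomial P A hA.isSelfAdjoint, hA.cfc_eq, IsHermitian.cfc,
    Unitary.conjStarAlgAut_apply]
  rfl

theorem trace_aeval (hA : A.IsHermitian) (P : ℝ[X]) :
    (aeval A P).trace = ∑ i, P.eval (hA.eigenvalues i) := by
  rw [hA.aeval_eq_conj_diagonal, trace_mul_cycle, Unitary.coe_star_mul_self, one_mul,
    trace_diagonal]

theorem finrank_ker_mulVecLin (hA : A.IsHermitian) :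
    Module.finrank ℝ (LinearMap.ker A.mulVecLin) = #{i | hA.eigenvalues i = 0} := by
  have hrank := LinearMap.finrank_range_add_finrank_ker A.mulVecLin
  rw [Module.finrank_fintype_fun_eq_card, ← Matrix.rank, hA.rank_eq_card_non_zero_eigs,
    Fintype.card_subtype, ← Finset.card_univ, ← Finset.card_filter_add_card_filter_not (s := univ)
      (fun i ↦ hA.eigenvalues i = 0)] at hrank
  simp only [ne_eq] at hrank
  omega

theorem abs_dotProduct_aeval_mulVec_le (hA : A.IsHermitian) {P : ℝ[X]}
    (hP : ∀ i, |P.eval (hA.eigenvalues i)| ≤ 1) (v : ι → ℝ) :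
    |v ⬝ᵥ (aeval A P *ᵥ v)| ≤ v ⬝ᵥ v := by
  set U : Matrix ι ι ℝ := (hA.eigenvectorUnitary : Matrix ι ι ℝ)
  have hstar : star U = Uᵀ := conjTranspose_eq_transpose_of_trivial U
  have hUUt : U * Uᵀ = 1 := by
    rw [← hstar, Unitary.mul_star_self_of_mem hA.eigenvectorUnitary.2]
  calc |v ⬝ᵥ (aeval A P *ᵥ v)|
      = |(Uᵀ *ᵥ v) ⬝ᵥ (diagonal (fun i ↦ P.eval (hA.eigenvalues i)) *ᵥ (Uᵀ *ᵥ v))| := by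
        rw [hA.aeval_eq_conj_diagonal, hstar, dotProduct_mul_mul_transpose_mulVec]
    _ ≤ (Uᵀ *ᵥ v) ⬝ᵥ (Uᵀ *ᵥ v) := abs_dotProduct_diagonal_mulVec_le hP _
    _ = v ⬝ᵥ v := by
        simpa [hUUt] using (dotProduct_mul_mul_transpose_mulVec U 1 v).symm

theorem abs_trace_aeval_sub_finrank_ker_le (hA : A.IsHermitian) {P : ℝ[X]} {ε : ℝ}
    (hP : ∀ i, |P.eval (hA.eigenvalues i) - if hA.eigenvalues i = 0 then 1 else 0| ≤ ε) :
    |(aeval A P).trace - Module.finrank ℝ (LinearMap.ker A.mulVecLin)| ≤ Fintype.card ι * ε := by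
  rw [hA.trace_aeval, hA.finrank_ker_mulVecLin, card_filter, Nat.cast_sum, ← sum_sub_distrib]
  refine (abs_sum_le_sum_abs _ _).trans ?_
  simpa using sum_le_sum fun i (_ : i ∈ univ) ↦ hP i

end IsHermitian

end Matrix

theorem hadamardCol_eq_prod (n : ℕ) (c x : Fin n → Bool) :
    hadamardCol n c x = ∏ i, if x i ∧ c i then (-1 : ℝ) else 1 := by
  rw [hadamardCol, prod_ite, prod_const, prod_const, one_pow, mul_one]

theorem hadamardCol_mul_self (n : ℕ) (c x : Fin n → Bool) :
    hadamardCol n c x * hadamardCol n c x = 1 := by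
  rw [hadamardCol, ← pow_add]
  exact Even.neg_one_pow ⟨_, rfl⟩

theorem dotProduct_hadamardCol_self (n : ℕ) (c : Fin n → Bool) :
    hadamardCol n c ⬝ᵥ hadamardCol n c = 2 ^ n := by
  simp [dotProduct, hadamardCol_mul_self]

theorem sum_hadamardCol_mul_hadamardCol (n : ℕ) (x y : Fin n → Bool) :
    ∑ c, hadamardCol n c x * hadamardCol n c y = if x = y then 2 ^ n else 0 := by
  simp_rw [hadamardCol_eq_prod, ← prod_mul_distrib]
  rw [← Fintype.prod_sum fun i (b : Bool) ↦
    (if x i ∧ b then (-1 : ℝ) else 1) * if y i ∧ b then -1 else 1]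
  split_ifs with hxy
  · subst hxy
    rw [show (2 : ℝ) ^ n = ∏ _i : Fin n, 2 by simp]
    refine prod_congr rfl fun i _ ↦ ?_
    cases x i <;> norm_num
  · obtain ⟨i, hi⟩ := Function.ne_iff.mp hxy
    refine prod_eq_zero (mem_univ i) ?_
    revert hi
    cases x i <;> cases y i <;> simp

theorem sum_hadamardCol_dotProduct_mulVec (n : ℕ) (M : Matrix (Fin n → Bool) (Fin n → Bool) ℝ) :
    ∑ c, hadamardCol n c ⬝ᵥ (M *ᵥ hadamardCol n c) = 2 ^ n * M.trace := by
  calc ∑ c, hadamardCol n c ⬝ᵥ (M *ᵥ hadamardCol n c)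
      = ∑ x, ∑ y, M x y * ∑ c, hadamardCol n c x * hadamardCol n c y := by
        simp only [dotProduct, mulVec, mul_sum]
        rw [sum_comm]
        refine sum_congr rfl fun x _ ↦ ?_
        rw [sum_comm]
        exact sum_congr rfl fun y _ ↦ sum_congr rfl fun c _ ↦ by ring
    _ = 2 ^ n * M.trace := by
        simp [sum_hadamardCol_mul_hadamardCol, trace, mul_sum, mul_comm]

theorem one_sub_two_mul_exp_le_card_filter_abs_hadamardEstimate_sub_lt
    {ι : Type*} [Fintype ι] [DecidableEq ι] {n : ℕ} (M : Matrix (Fin n → Bool) (Fin n → Bool) ℝ)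
    (hM : ∀ c, |hadamardCol n c ⬝ᵥ (M *ᵥ hadamardCol n c)| ≤ 2 ^ n) {t : ℝ} (ht : 0 ≤ t) :
    1 - 2 * exp (-(Fintype.card ι * t ^ 2) / 2) ≤
      (#{f : ι → (Fin n → Bool) | |(∑ l, hadamardCol n (f l) ⬝ᵥ (M *ᵥ hadamardCol n (f l)))
          / (Fintype.card ι * 2 ^ n) - M.trace / 2 ^ n| < t} : ℝ)
        / Fintype.card (ι → (Fin n → Bool)) := by
  have hN : (0 : ℝ) < 2 ^ n := by positivity
  have hY : ∀ c, hadamardCol n c ⬝ᵥ (M *ᵥ hadamardCol n c) / 2 ^ n ∈ Set.Icc (-1) 1 := fun c ↦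
    abs_le.mp ((abs_div _ _).trans_le (by rw [abs_of_pos hN, div_le_one hN]; exact hM c))
  have hmean : (∑ c, hadamardCol n c ⬝ᵥ (M *ᵥ hadamardCol n c) / 2 ^ n)
      / Fintype.card (Fin n → Bool) = M.trace / 2 ^ n := by
    rw [← sum_div, sum_hadamardCol_dotProduct_mulVec, mul_div_cancel_left₀ _ hN.ne']
    simp
  have h := one_sub_two_mul_exp_le_card_filter_abs_sampleMean_sub_mean_lt (ι := ι) _ hY ht
  rw [show -2 * (Fintype.card ι : ℝ) * t ^ 2 / (1 - -1) ^ 2 = -(Fintype.card ι * t ^ 2) / 2 by ring,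
    hmean] at h
  simpa only [← sum_div, div_div, mul_comm (2 ^ n : ℝ)] using h

theorem two_mul_exp_neg_le_of_log_le {x η : ℝ} (hη : 0 < η) (h : log (2 / η) ≤ x) :
    2 * exp (-x) ≤ η :=
  calc 2 * exp (-x) ≤ 2 * exp (-log (2 / η)) := by gcongr
    _ = η := by rw [exp_neg, exp_log (by positivity), inv_div]; field_simp

/-- Stochastic Chebyshev Betti-number estimator: there is an absolute constant
`C > 0` such that for every Hermitian `N × N` matrix `A` (`N = 2^n`) with
eigenvalues in `{0} ∪ [δ, 1]` and kernel dimension `β`, and every degree-`m`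
polynomial `p~` with `|p~| ≤ 1` on `[0,1]` and `|p~(λ) − 1_{λ=0}| ≤ ε` on the
spectrum, if `n_v ≥ C log(2/η)/ε²` and `m ≥ log₂(1/ε)/√δ` then, with
probability at least `1 − η` over `n_v` i.i.d. uniform Hadamard columns, the
estimator `χ = (1/(n_v N)) Σ_l ⟨v_l| p~(A) |v_l⟩` satisfies `|χ − β/N| ≤ 2ε`. -/
theorem nisq_tda_estimator_guarantee :
    ∃ C : ℝ, 0 < C ∧
      ∀ (n nv m : ℕ) (hnv : 0 < nv)
        (A : Matrix (Fin n → Bool) (Fin n → Bool) ℝ) (hA : A.IsHermitian)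
        (δ ε η : ℝ), 0 < δ → δ < 1 → 0 < ε → ε < 1 → 0 < η → η < 1 →
        (∀ i, hA.eigenvalues i = 0 ∨ (δ ≤ hA.eigenvalues i ∧ hA.eigenvalues i ≤ 1)) →
        ∀ (P : Polynomial ℝ), P.natDegree = m →
        (∀ x ∈ Set.Icc (0 : ℝ) 1, |P.eval x| ≤ 1) →
        (∀ i, |P.eval (hA.eigenvalues i) - (if hA.eigenvalues i = 0 then 1 else 0)| ≤ ε) →
        (nv : ℝ) ≥ C * Real.log (2 / η) / ε ^ 2 →
        (m : ℝ) ≥ Real.logb 2 (1 / ε) / Real.sqrt δ →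
        (1 : ℝ) - η ≤
          ((Finset.univ.filter fun f : Fin nv → (Fin n → Bool) =>
              |(1 / ((nv : ℝ) * Fintype.card (Fin n → Bool))) *
                  (∑ l, dotProduct (hadamardCol n (f l))
                    (((Polynomial.aeval A) P).mulVec (hadamardCol n (f l))))
                - (Module.finrank ℝ (LinearMap.ker A.mulVecLin) : ℝ) /
                    (Fintype.card (Fin n → Bool) : ℝ)| ≤ 2 * ε).card : ℝ)
            / (Fintype.card (Fin nv → (Fin n → Bool)) : ℝ) := by
  refine ⟨2, two_pos, fun n nv m hnv A hA δ ε η hδ _ hε _ hη _ heig P _ hP1 hPe hnv_ge _ ↦ ?_⟩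
  have hN : (Fintype.card (Fin n → Bool) : ℝ) = 2 ^ n := by simp
  have hquad : ∀ c, |hadamardCol n c ⬝ᵥ (aeval A P *ᵥ hadamardCol n c)| ≤ 2 ^ n := by
    refine fun c ↦ (hA.abs_dotProduct_aeval_mulVec_le (fun i ↦ hP1 _ ?_) _).trans_eq
      (dotProduct_hadamardCol_self n c)
    rcases heig i with h | h
    · simp [h]
    · exact ⟨hδ.le.trans h.1, h.2⟩
  have htrace : |(aeval A P).trace / 2 ^ n
      - (Module.finrank ℝ (LinearMap.ker A.mulVecLin) : ℝ) / 2 ^ n| ≤ ε := by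
    have hN0 : (0 : ℝ) < 2 ^ n := by positivity
    rw [← sub_div, abs_div, abs_of_pos hN0, div_le_iff₀ hN0, mul_comm, ← hN]
    exact hA.abs_trace_aeval_sub_finrank_ker_le hPe
  have hexp : 2 * exp (-(nv * ε ^ 2) / 2) ≤ η := by
    rw [neg_div]
    refine two_mul_exp_neg_le_of_log_le hη ?_
    rw [ge_iff_le, div_le_iff₀ (by positivity)] at hnv_ge
    linarith
  have hconc := one_sub_two_mul_exp_le_card_filter_abs_hadamardEstimate_sub_lt (ι := Fin nv)
    (aeval A P) hquad hε.le
  rw [Fintype.card_fin] at hconc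
  refine le_trans (by linarith) (hconc.trans (div_le_div_of_nonneg_right
    (Nat.cast_le.mpr (card_le_card fun f hf ↦ ?_)) (Nat.cast_nonneg _)))
  simp only [mem_filter, mem_univ, true_and] at hf ⊢
  rw [hN, one_div_mul_eq_div]
  calc _ ≤ _ := abs_sub_le _ ((aeval A P).trace / 2 ^ n) _
    _ ≤ 2 * ε := by linarith
end
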